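/- arXiv:math/0703404 — 2 statements merged into one kernel-verified Lean document; each statement's English description precedes it below -/
import Mathlib

section
/- The operator Δ on H squares to zero: Δ ∘ Δ = 0 as ℤ-linear operators on H. -/
open MvPolynomial Finset

noncomputable def ee (K : Type) [CommRing K] (n : ℕ) : ℕ → MvPolynomial (Fin n) K
  | 0 => 1
  | (m + 1) => if h : m + 1 ≤ n then MvPolynomial.X ⟨m, by omega⟩ else 0

noncomputable def DD (K : Type) [CommRing K] (n : ℕ) (i : Fin n) :
    MvPolynomial (Fin n) K →ₗ[K] MvPolynomial (Fin n) K :=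
  ∑ j : Fin n, if i ≤ j then
    (LinearMap.mulLeft K (ee K n (j.val - i.val))).comp (MvPolynomial.pderiv j).toLinearMap
  else 0

/-- The model of `H = Λ_ℤ(α_1,…,α_n) ⊗ ℤ[e_1,…,e_n]`: a function `a : H' n` represents
`∑_I α_I · (a I)`. -/
abbrev H' (n : ℕ) := Finset (Fin n) → MvPolynomial (Fin n) ℤ

/-- `sgn I K` : the Koszul sign defined by `α_{I∪K} = sgn(I,K) α_I α_K` for disjoint `I, K`. -/
def sgn (n : ℕ) (I K : Finset (Fin n)) : ℤ :=
  (-1) ^ (((I ×ˢ K).filter (fun p => p.2 < p.1)).card)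

/-- The basis element `α_I e^J` (more generally `α_I · p`). -/
noncomputable def bas {n : ℕ} (I : Finset (Fin n)) (p : MvPolynomial (Fin n) ℤ) : H' n :=
  fun S => if S = I then p else 0

/-- The graded-commutative product on `H`. -/
noncomputable def wmul {n : ℕ} (a b : H' n) : H' n :=
  fun S => ∑ I ∈ S.powerset, sgn n I (S \ I) * a I * b (S \ I)

/-- The odd derivation `∂/∂α_ℓ` of `H` (ℤ-linear in `a`). -/
noncomputable def oda {n : ℕ} (l : Fin n) (a : H' n) : H' n :=
  fun S => if l ∈ S then 0
    else ((-1 : ℤ) ^ ((S.filter (fun i => i < l)).card)) • a (insert l S)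

/-- The BV operator: `Δ(α_I e^J) = ∑_ℓ (∂α_I/∂α_ℓ) · D_ℓ(e^J)`, extended ℤ-linearly. -/
noncomputable def Hdel {n : ℕ} (a : H' n) : H' n :=
  fun S => ∑ l : Fin n, if l ∈ S then 0
    else ((-1 : ℤ) ^ ((S.filter (fun i => i < l)).card)) • DD ℤ n l (a (insert l S))

/-- The BV bracket `{a,b} = (−1)^{|a|}(Δ(a·b) − Δ(a)·b) − a·Δ(b)`, defined on basis elements
and extended ℤ-bilinearly (via the canonical decomposition `a = ∑_I α_I (a I)`). -/
noncomputable def bk {n : ℕ} (a b : H' n) : H' n :=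
  ∑ I : Finset (Fin n),
    (((-1 : ℤ) ^ I.card) • (Hdel (wmul (bas I (a I)) b) - wmul (Hdel (bas I (a I))) b)
      - wmul (bas I (a I)) (Hdel b))

theorem DD_apply (K : Type) [CommRing K] (n : ℕ) (i : Fin n) (p : MvPolynomial (Fin n) K) :
    DD K n i p = ∑ j : Fin n, if i ≤ j then ee K n (j.val - i.val) * pderiv j p else 0 := by
  rw [DD, LinearMap.sum_apply]
  refine Finset.sum_congr rfl fun j _ => ?_
  split_ifs <;> simp

theorem pderiv_ee (K : Type) [CommRing K] (n : ℕ) (k : Fin n) (t : ℕ) :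
    pderiv k (ee K n t) = if k.val + 1 = t then 1 else 0 := by
  match t with
  | 0 => simp [ee]
  | (s+1) =>
    rw [ee]
    split_ifs with h h2 h2
    · have hk : (⟨s, by omega⟩ : Fin n) = k := by apply Fin.ext; simp; omega
      rw [hk]; simp
    · have hk : (⟨s, by omega⟩ : Fin n) ≠ k := by
        intro he; apply h2; have := congrArg Fin.val he; simp at this; omega
      exact pderiv_X_of_ne hk
    · exfalso; have := k.isLt; omega
    · simp

theorem dd_inner_sum (n : ℕ) (i j m : Fin n) (q : MvPolynomial (Fin n) ℤ) :
    (∑ k : Fin n, if i ≤ k then (if j ≤ m then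
        ee ℤ n (k.val - i.val) * (pderiv k (ee ℤ n (m.val - j.val)) * q) else 0) else 0)
      = (if i.val + j.val + 1 ≤ m.val then ee ℤ n (m.val - i.val - j.val - 1) else 0) * q := by
  simp only [pderiv_ee]
  by_cases h : i.val + j.val + 1 ≤ m.val
  · have hm : m.val < n := m.isLt
    rw [Finset.sum_eq_single (⟨m.val - j.val - 1, by omega⟩ : Fin n)]
    · have c1 : i ≤ (⟨m.val - j.val - 1, by omega⟩ : Fin n) := Fin.le_def.mpr (by simp; omega)
      have c2 : j ≤ m := Fin.le_def.mpr (by omega)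
      have c3 : ((⟨m.val - j.val - 1, by omega⟩ : Fin n) : ℕ) + 1 = m.val - j.val := by
        simp; omega
      rw [if_pos c1, if_pos c2, if_pos c3, if_pos h, one_mul]
      show ee ℤ n (m.val - j.val - 1 - i.val) * q = _
      congr 2
      omega
    · intro k _ hk
      split_ifs with h1 h2 h3
      · exfalso; apply hk; apply Fin.ext; simp; omega
      · ring
      · ring
      · rfl
    · intro hmem; exact absurd (Finset.mem_univ _) hmem
  · rw [if_neg h]
    rw [Finset.sum_eq_zero, zero_mul]
    intro k _
    split_ifs with h1 h2 h3
    · exfalso; rw [Fin.le_def] at h1 h2; omega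
    · ring
    · ring
    · rfl

theorem pderiv_pderiv_comm' {σ R : Type*} [CommSemiring R] (i j : σ) (p : MvPolynomial σ R) :
    pderiv i (pderiv j p) = pderiv j (pderiv i p) := by
  induction p using MvPolynomial.induction_on with
  | C a => simp
  | add p q hp hq => simp [hp, hq]
  | mul_X p k hp =>
    classical
    simp only [pderiv_mul, pderiv_X, Pi.single_apply, map_add, map_mul, hp, map_zero,
      mul_ite, mul_one, mul_zero, ite_mul, one_mul, zero_mul]
    split_ifs <;> (try simp only [map_zero, add_zero]) <;> ring

noncomputable def AA (n : ℕ) (i j : Fin n) (p : MvPolynomial (Fin n) ℤ) :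
    MvPolynomial (Fin n) ℤ :=
  ∑ m : Fin n,
    (if i.val + j.val + 1 ≤ m.val then ee ℤ n (m.val - i.val - j.val - 1) else 0) * pderiv m p

noncomputable def BB (n : ℕ) (i j : Fin n) (p : MvPolynomial (Fin n) ℤ) :
    MvPolynomial (Fin n) ℤ :=
  ∑ k : Fin n, ∑ m : Fin n,
    if i ≤ k then (if j ≤ m then
      ee ℤ n (k.val - i.val) * ee ℤ n (m.val - j.val) * pderiv k (pderiv m p) else 0) else 0

theorem DD_DD (n : ℕ) (i j : Fin n) (p : MvPolynomial (Fin n) ℤ) :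
    DD ℤ n i (DD ℤ n j p) = AA n i j p + BB n i j p := by
  have step1 : DD ℤ n i (DD ℤ n j p) =
      ∑ k : Fin n, ∑ m : Fin n,
        ((if i ≤ k then (if j ≤ m then
            ee ℤ n (k.val - i.val) * (pderiv k (ee ℤ n (m.val - j.val)) * pderiv m p)
          else 0) else 0)
        + (if i ≤ k then (if j ≤ m then
            ee ℤ n (k.val - i.val) * ee ℤ n (m.val - j.val) * pderiv k (pderiv m p)
          else 0) else 0)) := by
    rw [DD_apply]
    refine Finset.sum_congr rfl fun k _ => ?_
    by_cases hik : i ≤ k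
    · simp only [if_pos hik]
      rw [DD_apply, map_sum, Finset.mul_sum]
      refine Finset.sum_congr rfl fun m _ => ?_
      by_cases hjm : j ≤ m
      · simp only [if_pos hjm]; rw [pderiv_mul]; ring
      · simp only [if_neg hjm, map_zero, mul_zero, add_zero]
    · simp only [if_neg hik, add_zero, Finset.sum_const_zero]
  rw [step1]
  simp only [Finset.sum_add_distrib]
  congr 1
  rw [Finset.sum_comm]
  unfold AA
  refine Finset.sum_congr rfl fun m _ => ?_
  exact dd_inner_sum n i j m (pderiv m p)

theorem DD_comm (n : ℕ) (i j : Fin n) (p : MvPolynomial (Fin n) ℤ) :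
    DD ℤ n i (DD ℤ n j p) = DD ℤ n j (DD ℤ n i p) := by
  rw [DD_DD, DD_DD]
  congr 1
  · unfold AA
    refine Finset.sum_congr rfl fun m _ => ?_
    rw [show m.val - i.val - j.val - 1 = m.val - j.val - i.val - 1 from by omega,
        show i.val + j.val + 1 = j.val + i.val + 1 from by omega]
  · unfold BB
    rw [Finset.sum_comm]
    refine Finset.sum_congr rfl fun k _ => ?_
    refine Finset.sum_congr rfl fun m _ => ?_
    by_cases h1 : j ≤ k <;> by_cases h2 : i ≤ m <;>
      simp only [if_pos, if_neg, h1, h2, if_true, if_false]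
    rw [pderiv_pderiv_comm']
    ring


theorem card_filter_insert {n : ℕ} (S : Finset (Fin n)) (m l : Fin n) (hm : m ∉ S) :
    ((insert m S).filter (fun i => i < l)).card
      = (S.filter (fun i => i < l)).card + (if m < l then 1 else 0) := by
  rw [Finset.filter_insert]
  split_ifs with h
  · rw [Finset.card_insert_of_notMem (fun hc => hm (Finset.mem_filter.mp hc).1)]
  · rfl

theorem stmt5 (n : ℕ) (hn : 1 ≤ n) (a : H' n) :
    Hdel (Hdel a) = 0 := by
  funext S
  set f : Fin n → Fin n → MvPolynomial (Fin n) ℤ := fun m l =>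
    if m ∈ S then 0 else if l ∈ insert m S then 0 else
      (((-1:ℤ) ^ ((S.filter (fun i => i < m)).card))
        * ((-1:ℤ) ^ (((insert m S).filter (fun i => i < l)).card)))
        • DD ℤ n m (DD ℤ n l (a (insert l (insert m S)))) with hf
  have hsum : Hdel (Hdel a) S = ∑ m : Fin n, ∑ l : Fin n, f m l := by
    show (∑ m : Fin n, _) = _
    refine Finset.sum_congr rfl fun m _ => ?_
    by_cases hm : m ∈ S
    · rw [if_pos hm, Finset.sum_eq_zero]
      intro l _
      rw [hf]; simp only [if_pos hm]
    · rw [if_neg hm]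
      show ((-1:ℤ) ^ _) • DD ℤ n m (∑ l : Fin n, _) = _
      rw [map_sum, Finset.smul_sum]
      refine Finset.sum_congr rfl fun l _ => ?_
      rw [hf]
      simp only [if_neg hm]
      by_cases hl : l ∈ insert m S
      · rw [if_pos hl, if_pos hl, map_zero, smul_zero]
      · rw [if_neg hl, if_neg hl, map_smul, smul_smul]
  have hanti : ∀ m l : Fin n, f m l = - f l m := by
    intro m l
    simp only [hf]
    by_cases hm : m ∈ S
    · by_cases hl : l ∈ S
      · rw [if_pos hm, if_pos hl, neg_zero]
      · rw [if_pos hm, if_neg hl, if_pos (Finset.mem_insert_of_mem hm), neg_zero]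
    · by_cases hl : l ∈ S
      · rw [if_neg hm, if_pos hl, if_pos (Finset.mem_insert_of_mem hl), neg_zero]
      · by_cases hml : m = l
        · subst hml
          rw [if_neg hm, if_pos (Finset.mem_insert_self m S), neg_zero]
        · have hlm : l ∉ insert m S := by
            rw [Finset.mem_insert]
            rintro (h | h)
            · exact hml h.symm
            · exact hl h
          have hml' : m ∉ insert l S := by
            rw [Finset.mem_insert]
            rintro (h | h)
            · exact hml h
            · exact hm h
          rw [if_neg hm, if_neg hlm, if_neg hl, if_neg hml']
          rw [DD_comm, Finset.insert_comm l m S, ← neg_smul]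
          congr 1
          rw [card_filter_insert S m l hm, card_filter_insert S l m hl]
          rcases lt_or_gt_of_ne hml with h | h
          · rw [if_pos h, if_neg (asymm h), add_zero, pow_succ]
            ring
          · rw [if_neg (asymm h), if_pos h, add_zero, pow_succ]
            ring
  rw [hsum]
  have key : (∑ m : Fin n, ∑ l : Fin n, f m l) = -(∑ m : Fin n, ∑ l : Fin n, f m l) := by
    nth_rewrite 1 [Finset.sum_comm]
    rw [← Finset.sum_neg_distrib]
    refine Finset.sum_congr rfl fun l _ => ?_
    rw [← Finset.sum_neg_distrib]
    refine Finset.sum_congr rfl fun m _ => ?_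
    exact hanti _ _
  have h2 : (2 : MvPolynomial (Fin n) ℤ) * (∑ m : Fin n, ∑ l : Fin n, f m l) = 0 := by
    linear_combination key
  rcases mul_eq_zero.mp h2 with h' | h'
  · exact absurd h' two_ne_zero
  · exact h'.trans rfl
end

section
/- The bracket on H coincides with the Poisson bracket of the odd symplectic form ω = Σ_ℓ dα_ℓ ∧ dh_ℓ: for all subsets I, K ⊆ {1, …, n} and monomials e^J, e^L of R, {α_I e^J, α_K e^L} = Σ_{ℓ=1}^{n} [ (−1)^{|I|} (∂α_I/∂α_ℓ)·e^J · α_K·D_ℓ(e^L) + α_I·D_ℓ(e^J) · (∂α_K/∂α_ℓ)·e^L ], where products are taken in the graded-commutative algebra H. -/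
open MvPolynomial Finset

lemma sq_neg_one (c : ℕ) : ((-1:ℤ)^c) * (-1)^c = 1 := by
  rw [← pow_add, ← two_mul, pow_mul, neg_one_sq, one_pow]

lemma sgn_eq (n : ℕ) (I K : Finset (Fin n)) :
    sgn n I K = (-1:ℤ) ^ (∑ i ∈ I, (K.filter (· < i)).card) := by
  unfold sgn
  congr 1
  rw [Finset.card_filter, Finset.sum_product]
  exact Finset.sum_congr rfl fun i _ => (Finset.card_filter _ _).symm

lemma S1' (n : ℕ) (I K : Finset (Fin n)) (l : Fin n) (hl : l ∈ I) :
    sgn n I K = sgn n (I.erase l) K * (-1:ℤ) ^ ((K.filter (· < l)).card) := by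
  rw [sgn_eq, sgn_eq, ← pow_add]
  congr 1
  exact (Finset.sum_erase_add I _ hl).symm

lemma filter_card_split (n : ℕ) (K : Finset (Fin n)) (l i : Fin n) (hl : l ∈ K) :
    (K.filter (· < i)).card = ((K.erase l).filter (· < i)).card + (if l < i then 1 else 0) := by
  rw [Finset.filter_erase]
  by_cases h : l < i
  · have hm : l ∈ K.filter (· < i) := Finset.mem_filter.2 ⟨hl, h⟩
    rw [if_pos h, Finset.card_erase_of_mem hm]
    have : 0 < (K.filter (· < i)).card := Finset.card_pos.2 ⟨l, hm⟩
    omega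
  · have hm : l ∉ K.filter (· < i) := fun hm => h (Finset.mem_filter.1 hm).2
    rw [if_neg h, Finset.erase_eq_of_notMem hm, add_zero]

lemma S2' (n : ℕ) (I K : Finset (Fin n)) (l : Fin n) (hl : l ∈ K) :
    sgn n I K = sgn n I (K.erase l) * (-1:ℤ) ^ ((I.filter (l < ·)).card) := by
  rw [sgn_eq, sgn_eq, ← pow_add]
  congr 1
  rw [Finset.card_filter, ← Finset.sum_add_distrib]
  exact Finset.sum_congr rfl fun i _ => filter_card_split n K l i hl

lemma filter_lt_gt_card (n : ℕ) (T : Finset (Fin n)) (l : Fin n) (hl : l ∉ T) :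
    (T.filter (· < l)).card + (T.filter (l < ·)).card = T.card := by
  rw [show T.filter (l < ·) = T.filter (fun i => ¬ i < l) from
    Finset.filter_congr fun i hi => by
      constructor
      · intro h; omega
      · intro h
        rcases lt_or_eq_of_le (le_of_not_gt h) with h' | h'
        · exact h'
        · exact absurd (h' ▸ hl) (fun c => c hi)]
  exact Finset.card_filter_add_card_filter_not _

lemma bas_zero {n : ℕ} (I : Finset (Fin n)) : bas I (0 : MvPolynomial (Fin n) ℤ) = 0 := by
  funext S; simp [bas]

lemma bas_add {n : ℕ} (I : Finset (Fin n)) (p q : MvPolynomial (Fin n) ℤ) :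
    bas I p + bas I q = bas I (p + q) := by
  funext S; simp only [bas, Pi.add_apply]; split <;> simp

lemma smul_bas {n : ℕ} (c : ℤ) (I : Finset (Fin n)) (p : MvPolynomial (Fin n) ℤ) :
    c • bas I p = bas I (c • p) := by
  funext S; simp only [bas, Pi.smul_apply]; split <;> simp

lemma wmul_zero_left {n : ℕ} (b : H' n) : wmul 0 b = 0 := by
  funext S; simp [wmul]

lemma wmul_zero_right {n : ℕ} (a : H' n) : wmul a 0 = 0 := by
  funext S; simp [wmul]

lemma oda_zero {n : ℕ} (l : Fin n) : oda l (0 : H' n) = 0 := by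
  funext S; simp [oda]

lemma Hdel_zero {n : ℕ} : Hdel (0 : H' n) = 0 := by
  funext S; simp [Hdel]

lemma wmul_sum_left {n : ℕ} {ι : Type} (s : Finset ι) (f : ι → H' n) (b : H' n) :
    wmul (∑ i ∈ s, f i) b = ∑ i ∈ s, wmul (f i) b := by
  funext S
  simp only [wmul, Finset.sum_apply]
  rw [Finset.sum_comm]
  exact Finset.sum_congr rfl fun T _ => by rw [← Finset.sum_mul, ← Finset.mul_sum]

lemma wmul_sum_right {n : ℕ} {ι : Type} (s : Finset ι) (f : ι → H' n) (a : H' n) :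
    wmul a (∑ i ∈ s, f i) = ∑ i ∈ s, wmul a (f i) := by
  funext S
  simp only [wmul, Finset.sum_apply]
  rw [Finset.sum_comm]
  exact Finset.sum_congr rfl fun T _ => by rw [← Finset.mul_sum]

lemma wmul_smul_left {n : ℕ} (c : ℤ) (a b : H' n) : wmul (c • a) b = c • wmul a b := by
  funext S
  simp only [wmul, Pi.smul_apply, Finset.smul_sum, smul_eq_mul, zsmul_eq_mul]
  exact Finset.sum_congr rfl fun T _ => by ring

lemma wmul_smul_right {n : ℕ} (c : ℤ) (a b : H' n) : wmul a (c • b) = c • wmul a b := by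
  funext S
  simp only [wmul, Pi.smul_apply, Finset.smul_sum, smul_eq_mul, zsmul_eq_mul]
  exact Finset.sum_congr rfl fun T _ => by ring

lemma wmul_add_left {n : ℕ} (a a' b : H' n) : wmul (a + a') b = wmul a b + wmul a' b := by
  funext S
  simp only [wmul, Pi.add_apply, ← Finset.sum_add_distrib]
  exact Finset.sum_congr rfl fun T _ => by ring

lemma wmul_add_right {n : ℕ} (a b b' : H' n) : wmul a (b + b') = wmul a b + wmul a b' := by
  funext S
  simp only [wmul, Pi.add_apply, ← Finset.sum_add_distrib]
  exact Finset.sum_congr rfl fun T _ => by ring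

/-- Apply `D_l` to every coefficient. -/
noncomputable def Dmap {n : ℕ} (l : Fin n) (a : H' n) : H' n := fun S => DD ℤ n l (a S)

lemma Dmap_bas {n : ℕ} (l : Fin n) (T : Finset (Fin n)) (p : MvPolynomial (Fin n) ℤ) :
    Dmap l (bas T p) = bas T (DD ℤ n l p) := by
  funext S; simp only [Dmap, bas]; split <;> simp

lemma Dmap_add {n : ℕ} (l : Fin n) (a b : H' n) : Dmap l (a + b) = Dmap l a + Dmap l b := by
  funext S; simp [Dmap]

lemma Dmap_smul {n : ℕ} (l : Fin n) (c : ℤ) (a : H' n) : Dmap l (c • a) = c • Dmap l a := by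
  funext S
  show DD ℤ n l ((c • a) S) = c • DD ℤ n l (a S)
  rw [Pi.smul_apply, map_zsmul]

lemma Hdel_eq {n : ℕ} (a : H' n) : Hdel a = ∑ l : Fin n, Dmap l (oda l a) := by
  funext S
  simp only [Hdel, Finset.sum_apply, Dmap, oda]
  refine Finset.sum_congr rfl fun l _ => ?_
  split
  · simp
  · rw [map_zsmul]

lemma DD_mul (n : ℕ) (l : Fin n) (p q : MvPolynomial (Fin n) ℤ) :
    DD ℤ n l (p * q) = DD ℤ n l p * q + p * DD ℤ n l q := by
  unfold DD
  simp only [LinearMap.coe_sum, Finset.sum_apply]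
  rw [Finset.sum_mul, Finset.mul_sum, ← Finset.sum_add_distrib]
  refine Finset.sum_congr rfl fun j _ => ?_
  split
  · simp only [LinearMap.comp_apply, LinearMap.mulLeft_apply, Derivation.coeFn_coe,
      LinearMap.coe_mk]
    rw [MvPolynomial.pderiv_mul]
    ring
  · simp

lemma Dmap_wmul {n : ℕ} (l : Fin n) (a b : H' n) :
    Dmap l (wmul a b) = wmul (Dmap l a) b + wmul a (Dmap l b) := by
  funext S
  simp only [Dmap, wmul, Pi.add_apply, map_sum, ← Finset.sum_add_distrib]
  refine Finset.sum_congr rfl fun T _ => ?_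
  rw [mul_assoc, show ((sgn n T (S \ T) : MvPolynomial (Fin n) ℤ)) * (a T * b (S \ T))
      = (sgn n T (S \ T)) • (a T * b (S \ T)) from (zsmul_eq_mul _ _).symm, map_zsmul,
    DD_mul, zsmul_eq_mul]
  ring

lemma oda_bas {n : ℕ} (l : Fin n) (M : Finset (Fin n)) (r : MvPolynomial (Fin n) ℤ) :
    oda l (bas M r) = if l ∈ M then
      bas (M.erase l) ((-1:ℤ) ^ (((M.erase l).filter (fun i => i < l)).card) • r) else 0 := by
  by_cases hl : l ∈ M
  · rw [if_pos hl]
    funext S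
    simp only [oda, bas]
    by_cases hS : S = M.erase l
    · subst hS
      rw [if_neg (Finset.notMem_erase l M), if_pos (Finset.insert_erase hl), if_pos rfl]
    · rw [if_neg hS]
      by_cases hlS : l ∈ S
      · rw [if_pos hlS]
      · rw [if_neg hlS, if_neg fun h => hS (by rw [← h, Finset.erase_insert hlS]), smul_zero]
  · rw [if_neg hl]
    funext S
    simp only [oda, bas]
    by_cases hlS : l ∈ S
    · rw [if_pos hlS]; rfl
    · rw [if_neg hlS, if_neg (fun (h : insert l S = M) => hl (h ▸ Finset.mem_insert_self l S)), smul_zero]; rfl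

lemma wmul_bas_bas {n : ℕ} (A B : Finset (Fin n)) (p q : MvPolynomial (Fin n) ℤ) :
    wmul (bas A p) (bas B q)
      = if Disjoint A B then bas (A ∪ B) ((sgn n A B) • (p * q)) else 0 := by
  have key : ∀ S : Finset (Fin n), wmul (bas A p) (bas B q) S
      = if A ⊆ S ∧ S \ A = B then (sgn n A B : MvPolynomial (Fin n) ℤ) * p * q else 0 := by
    intro S
    simp only [wmul, bas]
    by_cases hA : A ⊆ S
    · rw [Finset.sum_eq_single A]
      · by_cases hB : S \ A = B
        · rw [if_pos rfl, if_pos hB, if_pos ⟨hA, hB⟩, hB]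
        · rw [if_neg hB, mul_zero, if_neg (fun (h : A ⊆ S ∧ S \ A = B) => hB h.2)]
      · intro T _ hT
        rw [if_neg hT, mul_zero, zero_mul]
      · intro h
        exact absurd (Finset.mem_powerset.2 hA) h
    · rw [if_neg (fun h => hA h.1)]
      refine Finset.sum_eq_zero fun T hT => ?_
      rw [if_neg (fun h : T = A => hA (h ▸ Finset.mem_powerset.1 hT)), mul_zero, zero_mul]
  by_cases hd : Disjoint A B
  · rw [if_pos hd]
    funext S
    rw [key S]
    simp only [bas]
    by_cases hS : S = A ∪ B
    · subst hS
      rw [if_pos ⟨Finset.subset_union_left, Finset.union_sdiff_cancel_left hd⟩, if_pos rfl,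
        zsmul_eq_mul, mul_assoc]
    · rw [if_neg hS, if_neg (fun (h : A ⊆ S ∧ S \ A = B) => hS (by rw [← h.2, Finset.union_sdiff_of_subset h.1]))]
  · rw [if_neg hd]
    funext S
    rw [key S]
    rw [if_neg (fun (h : A ⊆ S ∧ S \ A = B) => hd (h.2 ▸ Finset.disjoint_sdiff))]
    rfl

lemma sh1 (s : ℤ) (a b : ℕ) : (-1:ℤ)^(a+b) * (s * (-1)^b) = s * (-1)^a := by
  rw [pow_add]
  linear_combination (s * (-1:ℤ)^a) * sq_neg_one b

lemma union_erase_left {n : ℕ} (I K : Finset (Fin n)) (l : Fin n) (hlK : l ∈ K) :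
    I.erase l ∪ K = I ∪ K := by
  ext m
  simp only [Finset.mem_union, Finset.mem_erase]
  constructor
  · rintro (⟨-, h⟩ | h)
    · exact Or.inl h
    · exact Or.inr h
  · rintro (h | h)
    · by_cases hm : m = l
      · exact Or.inr (hm ▸ hlK)
      · exact Or.inl ⟨hm, h⟩
    · exact Or.inr h

lemma union_erase_right {n : ℕ} (I K : Finset (Fin n)) (l : Fin n) (hlI : l ∈ I) :
    I ∪ K.erase l = I ∪ K := by
  rw [Finset.union_comm, union_erase_left K I l hlI, Finset.union_comm]

lemma oda_leibniz {n : ℕ} (l : Fin n) (I K : Finset (Fin n)) (p q : MvPolynomial (Fin n) ℤ) :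
    oda l (wmul (bas I p) (bas K q))
      = wmul (oda l (bas I p)) (bas K q)
        + (-1:ℤ)^I.card • wmul (bas I p) (oda l (bas K q)) := by
  rw [wmul_bas_bas, oda_bas, oda_bas]
  by_cases hd : Disjoint I K
  · rw [if_pos hd, oda_bas]
    by_cases hlI : l ∈ I
    · have hlK : l ∉ K := Finset.disjoint_left.1 hd hlI
      have hd' : Disjoint (I.erase l) K := hd.mono_left (Finset.erase_subset l I)
      rw [if_pos (Finset.mem_union_left K hlI), if_pos hlI, if_neg hlK, wmul_zero_right,
        smul_zero, add_zero, wmul_bas_bas, if_pos hd',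
        Finset.erase_union_distrib, Finset.erase_eq_of_notMem hlK]
      refine congrArg (bas _) ?_
      simp only [smul_mul_assoc, mul_smul_comm, smul_smul]
      refine congrArg (fun z : ℤ => z • (p * q)) ?_
      have hcard : (((I.erase l ∪ K)).filter (fun i => i < l)).card
          = ((I.erase l).filter (fun i => i < l)).card + (K.filter (fun i => i < l)).card := by
        rw [Finset.filter_union, Finset.card_union_of_disjoint
          (Finset.disjoint_filter_filter hd')]
      rw [hcard, S1' n I K l hlI]
      exact sh1 _ _ _
    · by_cases hlK : l ∈ K
      · have hd' : Disjoint I (K.erase l) := hd.mono_right (Finset.erase_subset l K)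
        rw [if_pos (Finset.mem_union_right I hlK), if_neg hlI, if_pos hlK, wmul_zero_left,
          zero_add, wmul_bas_bas, if_pos hd', smul_bas,
          Finset.erase_union_distrib, Finset.erase_eq_of_notMem hlI]
        refine congrArg (bas _) ?_
        simp only [smul_mul_assoc, mul_smul_comm, smul_smul]
        refine congrArg (fun z : ℤ => z • (p * q)) ?_
        have hcard : (((I ∪ K.erase l)).filter (fun i => i < l)).card
            = (I.filter (fun i => i < l)).card + ((K.erase l).filter (fun i => i < l)).card := by
          rw [Finset.filter_union, Finset.card_union_of_disjoint
            (Finset.disjoint_filter_filter hd')]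
        rw [hcard, S2' n I K l hlK, ← filter_lt_gt_card n I l hlI, pow_add, pow_add]
        ring
      · rw [if_neg (fun h => (Finset.mem_union.1 h).elim hlI hlK), if_neg hlI, if_neg hlK,
          wmul_zero_left, wmul_zero_right, smul_zero, add_zero]
  · rw [if_neg hd, oda_zero]
    by_cases hlI : l ∈ I
    · by_cases hlK : l ∈ K
      · by_cases h1 : Disjoint (I.erase l) K
        · have h2 : Disjoint I (K.erase l) := by
            rw [Finset.disjoint_left]
            intro m hmI hmK'
            have hm := Finset.mem_erase.1 hmK'
            exact Finset.disjoint_left.1 h1 (Finset.mem_erase.2 ⟨hm.1, hmI⟩) hm.2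
          rw [if_pos hlI, if_pos hlK, wmul_bas_bas, wmul_bas_bas, if_pos h1, if_pos h2,
            union_erase_left I K l hlK, union_erase_right I K l hlI, smul_bas, bas_add]
          rw [show (0 : H' n) = bas (I ∪ K) 0 from (bas_zero _).symm]
          refine congrArg (bas _) ?_
          have hcard : I.card = ((I.erase l).filter (fun i => i < l)).card
              + ((I.erase l).filter (fun i => l < i)).card + 1 := by
            rw [filter_lt_gt_card n (I.erase l) l (Finset.notMem_erase l I),
              Finset.card_erase_add_one hlI]
          simp only [smul_mul_assoc, mul_smul_comm, smul_smul]
          rw [← add_smul, show (0 : MvPolynomial (Fin n) ℤ) = (0 : ℤ) • (p * q) by simp]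
          refine congrArg (fun z : ℤ => z • (p * q)) ?_
          rw [S2' n (I.erase l) K l hlK, S1' n I (K.erase l) l hlI, hcard]
          set a := ((I.erase l).filter (fun i => i < l)).card
          set b := ((I.erase l).filter (fun i => l < i)).card
          set c := ((K.erase l).filter (fun i => i < l)).card
          set s := sgn n (I.erase l) (K.erase l)
          rw [pow_succ, pow_add]
          linear_combination (s * (-1:ℤ)^a * (-1:ℤ)^b) * sq_neg_one c
        · have h2 : ¬ Disjoint I (K.erase l) := by
            intro h2
            obtain ⟨m, hm1, hm2⟩ := Finset.not_disjoint_iff.1 h1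
            have hm := Finset.mem_erase.1 hm1
            exact Finset.disjoint_left.1 h2 hm.2 (Finset.mem_erase.2 ⟨hm.1, hm2⟩)
          rw [if_pos hlI, if_pos hlK, wmul_bas_bas, wmul_bas_bas, if_neg h1, if_neg h2,
            smul_zero, add_zero]
      · have h1 : ¬ Disjoint (I.erase l) K := by
          intro h1
          refine hd ?_
          rw [← Finset.insert_erase hlI, Finset.disjoint_left]
          intro m hm
          rcases Finset.mem_insert.1 hm with h | h
          · exact h ▸ hlK
          · exact Finset.disjoint_left.1 h1 h
        rw [if_pos hlI, if_neg hlK, wmul_zero_right, smul_zero, add_zero, wmul_bas_bas,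
          if_neg h1]
    · by_cases hlK : l ∈ K
      · have h2 : ¬ Disjoint I (K.erase l) := by
          intro h2
          refine hd ?_
          rw [← Finset.insert_erase hlK, Finset.disjoint_right]
          intro m hm
          rcases Finset.mem_insert.1 hm with h | h
          · exact h ▸ hlI
          · exact Finset.disjoint_right.1 h2 h
        rw [if_neg hlI, if_pos hlK, wmul_zero_left, zero_add, wmul_bas_bas, if_neg h2,
          smul_zero]
      · rw [if_neg hlI, if_neg hlK, wmul_zero_left, wmul_zero_right, smul_zero, add_zero]

lemma bk_bas {n : ℕ} (I : Finset (Fin n)) (p : MvPolynomial (Fin n) ℤ) (b : H' n) :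
    bk (bas I p) b = (-1:ℤ)^I.card • (Hdel (wmul (bas I p) b) - wmul (Hdel (bas I p)) b)
      - wmul (bas I p) (Hdel b) := by
  unfold bk
  rw [Finset.sum_eq_single I]
  · rw [show (bas I p) I = p from if_pos rfl]
  · intro T _ hT
    rw [show (bas I p) T = 0 from if_neg hT, bas_zero, wmul_zero_left, Hdel_zero,
      wmul_zero_left, wmul_zero_left]
    simp
  · intro h
    exact absurd (Finset.mem_univ I) h

lemma bk_bas_bas {n : ℕ} (I K : Finset (Fin n)) (p q : MvPolynomial (Fin n) ℤ) :
    bk (bas I p) (bas K q)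
      = ∑ l : Fin n, ((-1:ℤ)^I.card • wmul (oda l (bas I p)) (bas K (DD ℤ n l q))
          + wmul (bas I (DD ℤ n l p)) (oda l (bas K q))) := by
  rw [bk_bas, Hdel_eq (wmul (bas I p) (bas K q)), Hdel_eq (bas I p), Hdel_eq (bas K q),
    wmul_sum_left, wmul_sum_right, ← Finset.sum_sub_distrib, Finset.smul_sum,
    ← Finset.sum_sub_distrib]
  refine Finset.sum_congr rfl fun l _ => ?_
  rw [oda_leibniz, Dmap_add, Dmap_smul, Dmap_wmul, Dmap_wmul, ← Dmap_bas l I p,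
    ← Dmap_bas l K q]
  set c : ℤ := (-1:ℤ)^I.card with hc
  simp only [smul_add, smul_sub, smul_smul, ← hc]
  rw [show c * c = 1 from sq_neg_one I.card, one_smul, one_smul]
  abel

theorem stmt7 (n : ℕ) (hn : 1 ≤ n) (I K : Finset (Fin n)) (J L : Fin n →₀ ℕ) :
    bk (bas I (MvPolynomial.monomial J 1)) (bas K (MvPolynomial.monomial L 1))
      = ∑ l : Fin n,
          (((-1 : ℤ) ^ I.card) •
              wmul (oda l (bas I (MvPolynomial.monomial J 1)))
                (bas K (DD ℤ n l (MvPolynomial.monomial L 1)))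
            + wmul (bas I (DD ℤ n l (MvPolynomial.monomial J 1)))
                (oda l (bas K (MvPolynomial.monomial L 1)))) :=
  bk_bas_bas I K _ _
end
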